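/- arXiv:1512.03528 — 6 statements merged into one kernel-verified Lean document; each statement's English description precedes it below -/
import Mathlib

section
/- Let n ≥ 1, let w_{1,1},…,w_{1,n} and w_{2,1},…,w_{2,n} be nonzero integers and ε_1, ε_2 ∈ {1, −1}. For i = 1, 2 let s_i^+ be the number of indices j with w_{i,j} > 0 and s_i^- the number with w_{i,j} < 0. Fix real numbers x, y and suppose the function z ↦ ε_1·∏_{j=1}^n (x·z^{w_{1,j}} + y)/(z^{w_{1,j}} − 1) + ε_2·∏_{j=1}^n (x·z^{w_{2,j}} + y)/(z^{w_{2,j}} − 1) is constant on the interval (1, ∞). Then its constant value equals ε_1·x^{s_1^+}·(−y)^{s_1^-} + ε_2·x^{s_2^+}·(−y)^{s_2^-}. -/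
open Filter Topology

lemma tend_zpow_pos {w : ℤ} (hw : 0 < w) :
    Tendsto (fun z : ℝ => z ^ w) atTop atTop := by
  have h : Tendsto (fun z : ℝ => z ^ w.toNat) atTop atTop := tendsto_pow_atTop (by omega)
  refine h.congr' ?_
  filter_upwards [eventually_gt_atTop (0:ℝ)] with z hz
  rw [← zpow_natCast, Int.toNat_of_nonneg hw.le]

lemma tend_factor (w : ℤ) (hw : w ≠ 0) (x y : ℝ) :
    Tendsto (fun z : ℝ => (x * z ^ w + y) / (z ^ w - 1)) atTop
      (𝓝 (if 0 < w then x else -y)) := by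
  rcases lt_or_gt_of_ne hw with hneg | hpos
  · rw [if_neg (by omega)]
    have h0 : Tendsto (fun z : ℝ => z ^ w) atTop (𝓝 0) := tendsto_zpow_atTop_zero hneg
    have : Tendsto (fun t : ℝ => (x * t + y) / (t - 1)) (𝓝 0) (𝓝 (-y)) := by
      have : ContinuousAt (fun t : ℝ => (x * t + y) / (t - 1)) 0 := by
        apply ContinuousAt.div (by fun_prop) (by fun_prop); norm_num
      have ht := this.tendsto
      norm_num at ht
      convert ht using 2
      rw [div_neg, div_one]
    exact this.comp h0
  · rw [if_pos hpos]
    have h0 : Tendsto (fun z : ℝ => z ^ w) atTop atTop := tend_zpow_pos hpos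
    have hx : Tendsto (fun t : ℝ => x + (x + y) / (t - 1)) atTop (𝓝 x) := by
      have : Tendsto (fun t : ℝ => (x + y) / (t - 1)) atTop (𝓝 0) :=
        Tendsto.div_atTop tendsto_const_nhds (tendsto_atTop_add_const_right _ _ tendsto_id)
      simpa using tendsto_const_nhds.add this
    have heq : ∀ᶠ t : ℝ in atTop, x + (x + y) / (t - 1) = (x * t + y) / (t - 1) := by
      filter_upwards [eventually_gt_atTop (1:ℝ)] with t ht
      have h1 : t - 1 ≠ 0 := by linarith
      field_simp
      ring
    exact (hx.congr' heq).comp h0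

lemma tend_prod (n : ℕ) (w : Fin n → ℤ) (hw : ∀ i, w i ≠ 0) (x y : ℝ) :
    Tendsto (fun z : ℝ => ∏ j, (x * z ^ (w j) + y) / (z ^ (w j) - 1)) atTop
      (𝓝 (x ^ (Finset.univ.filter (fun j => 0 < w j)).card *
        (-y) ^ (Finset.univ.filter (fun j => w j < 0)).card)) := by
  have h := tendsto_finset_prod (Finset.univ : Finset (Fin n))
    (fun j _ => tend_factor (w j) (hw j) x y)
  convert h using 2
  have hfe : Finset.univ.filter (fun j => ¬ 0 < w j) = Finset.univ.filter (fun j => w j < 0) := by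
    ext j
    simp only [Finset.mem_filter, Finset.mem_univ, true_and, not_lt]
    have := hw j; omega
  rw [Finset.prod_ite (fun _ => x) (fun _ => -y)]
  simp only [Finset.prod_const]
  rw [hfe]

/-- **Atiyah–Hirzebruch formula (equation (3)) for two fixed points.** If the function
`z ↦ ε₁ ∏ⱼ (x z^{w₁ⱼ} + y)/(z^{w₁ⱼ} − 1) + ε₂ ∏ⱼ (x z^{w₂ⱼ} + y)/(z^{w₂ⱼ} − 1)`
is constant on `(1, ∞)`, its constant value is
`ε₁ x^{s₁⁺} (−y)^{s₁⁻} + ε₂ x^{s₂⁺} (−y)^{s₂⁻}`, where `sᵢ⁺` (resp. `sᵢ⁻`) is the number of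
positive (resp. negative) weights at the `i`-th fixed point. -/
theorem stmt2 (n : ℕ) (hn : 1 ≤ n) (w₁ w₂ : Fin n → ℤ)
    (hw₁ : ∀ i, w₁ i ≠ 0) (hw₂ : ∀ i, w₂ i ≠ 0)
    (ε₁ ε₂ : ℝ) (hε₁ : ε₁ = 1 ∨ ε₁ = -1) (hε₂ : ε₂ = 1 ∨ ε₂ = -1)
    (x y : ℝ)
    (hconst : ∀ z z' : ℝ, 1 < z → 1 < z' →
      ε₁ * ∏ j, (x * z ^ (w₁ j) + y) / (z ^ (w₁ j) - 1) +
        ε₂ * ∏ j, (x * z ^ (w₂ j) + y) / (z ^ (w₂ j) - 1) =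
      ε₁ * ∏ j, (x * z' ^ (w₁ j) + y) / (z' ^ (w₁ j) - 1) +
        ε₂ * ∏ j, (x * z' ^ (w₂ j) + y) / (z' ^ (w₂ j) - 1)) :
    ∀ z : ℝ, 1 < z →
      ε₁ * ∏ j, (x * z ^ (w₁ j) + y) / (z ^ (w₁ j) - 1) +
        ε₂ * ∏ j, (x * z ^ (w₂ j) + y) / (z ^ (w₂ j) - 1) =
      ε₁ * x ^ (Finset.univ.filter (fun j => 0 < w₁ j)).card *
          (-y) ^ (Finset.univ.filter (fun j => w₁ j < 0)).card +
        ε₂ * x ^ (Finset.univ.filter (fun j => 0 < w₂ j)).card *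
          (-y) ^ (Finset.univ.filter (fun j => w₂ j < 0)).card := by
  intro z hz
  have hF : Tendsto (fun z' : ℝ =>
      ε₁ * ∏ j, (x * z' ^ (w₁ j) + y) / (z' ^ (w₁ j) - 1) +
        ε₂ * ∏ j, (x * z' ^ (w₂ j) + y) / (z' ^ (w₂ j) - 1)) atTop
      (𝓝 (ε₁ * (x ^ (Finset.univ.filter (fun j => 0 < w₁ j)).card *
          (-y) ^ (Finset.univ.filter (fun j => w₁ j < 0)).card) +
        ε₂ * (x ^ (Finset.univ.filter (fun j => 0 < w₂ j)).card *
          (-y) ^ (Finset.univ.filter (fun j => w₂ j < 0)).card))) :=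
    (((tend_prod n w₁ hw₁ x y).const_mul ε₁).add ((tend_prod n w₂ hw₂ x y).const_mul ε₂))
  have hC : Tendsto (fun z' : ℝ =>
      ε₁ * ∏ j, (x * z' ^ (w₁ j) + y) / (z' ^ (w₁ j) - 1) +
        ε₂ * ∏ j, (x * z' ^ (w₂ j) + y) / (z' ^ (w₂ j) - 1)) atTop
      (𝓝 (ε₁ * ∏ j, (x * z ^ (w₁ j) + y) / (z ^ (w₁ j) - 1) +
        ε₂ * ∏ j, (x * z ^ (w₂ j) + y) / (z ^ (w₂ j) - 1))) := by
    refine tendsto_const_nhds.congr' ?_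
    filter_upwards [eventually_gt_atTop (1:ℝ)] with z' hz'
    exact (hconst z z' hz hz').symm |>.symm
  have := tendsto_nhds_unique hC hF
  rw [this]; ring
end

section
/- Let k ≥ 1 and ℓ ≥ 1 be integers, and let a_1,…,a_k and b_1,…,b_ℓ be positive integers. Suppose the rigidity identity holds in ℤ[x,y,z]: ∏_{i=1}^k (x·z^{a_i} + y) · ∏_{j=1}^ℓ (x + y·z^{b_j}) − ∏_{i=1}^k (x + y·z^{a_i}) · ∏_{j=1}^ℓ (x·z^{b_j} + y) = (x^k·y^ℓ − x^ℓ·y^k) · ∏_{i=1}^k (z^{a_i} − 1) · ∏_{j=1}^ℓ (z^{b_j} − 1). Then a_1 + a_2 + … + a_k = b_1 + b_2 + … + b_ℓ. -/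
open MvPolynomial

/-- **Equation (6) of the paper.** If positive integers `a₁, …, a_k` and `b₁, …, b_ℓ` satisfy
the rigidity identity (equation (5) with denominators cleared) in `ℤ[x,y,z]`, then
`a₁ + ⋯ + a_k = b₁ + ⋯ + b_ℓ` (obtained by setting `y = 0`). -/
theorem stmt4 (k ℓ : ℕ) (hk : 1 ≤ k) (hℓ : 1 ≤ ℓ)
    (a : Fin k → ℕ) (b : Fin ℓ → ℕ)
    (ha : ∀ i, 0 < a i) (hb : ∀ j, 0 < b j)
    (X Y Z : MvPolynomial (Fin 3) ℤ)
    (hX : X = MvPolynomial.X 0) (hY : Y = MvPolynomial.X 1) (hZ : Z = MvPolynomial.X 2)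
    (hrigid : (∏ i, (X * Z ^ (a i) + Y)) * (∏ j, (X + Y * Z ^ (b j))) -
        (∏ i, (X + Y * Z ^ (a i))) * (∏ j, (X * Z ^ (b j) + Y)) =
      (X ^ k * Y ^ ℓ - X ^ ℓ * Y ^ k) * (∏ i, (Z ^ (a i) - 1)) * (∏ j, (Z ^ (b j) - 1))) :
    ∑ i, a i = ∑ j, b j := by
  have h := congrArg (MvPolynomial.aeval (R := ℤ)
      ![1, 0, (Polynomial.X : Polynomial ℤ)]) hrigid
  simp only [hX, hY, hZ, map_sub, map_mul, map_prod, map_add, map_pow,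
    MvPolynomial.aeval_X, Matrix.cons_val_zero, Matrix.cons_val_one, Matrix.head_cons,
    Matrix.cons_val_two, Matrix.tail_cons, one_mul, mul_zero, zero_mul, add_zero,
    Finset.prod_const, one_pow, mul_one, sub_self, map_one] at h
  rw [zero_pow (Nat.one_le_iff_ne_zero.mp hℓ), zero_pow (Nat.one_le_iff_ne_zero.mp hk),
    sub_zero, zero_mul, zero_mul, sub_eq_zero] at h
  have := congrArg Polynomial.natDegree h
  simpa [Finset.prod_pow_eq_pow_sum] using this
end

section
/- Let k ≥ 1 and ℓ ≥ 1 be integers, and let a_1,…,a_k and b_1,…,b_ℓ be positive integers such that a_1 ≥ a_i for all i and a_1 > b_j for all j. Suppose the rigidity identity holds in ℤ[x,y,z]: ∏_{i=1}^k (x·z^{a_i} + y) · ∏_{j=1}^ℓ (x + y·z^{b_j}) − ∏_{i=1}^k (x + y·z^{a_i}) · ∏_{j=1}^ℓ (x·z^{b_j} + y) = (x^k·y^ℓ − x^ℓ·y^k) · ∏_{i=1}^k (z^{a_i} − 1) · ∏_{j=1}^ℓ (z^{b_j} − 1). Then k·a_1 = b_1 + b_2 + … + b_ℓ. -/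
/-!
Put `x = -z^{a₁}`, `y = 1`. The factor `x + y z^{a₁}` kills the second product on the left,
and what remains is an identity in `ℤ[z]` between `z^{b₁ + ⋯ + b_ℓ}` and `z^{min(k,ℓ)·a₁}`,
each times a polynomial with nonzero constant term (for `k = ℓ` the right side is `0`, which
is absurd). Comparing orders of vanishing at `z = 0` gives `∑ bⱼ = min(k,ℓ)·a₁`, and since
`∑ bⱼ < ℓ·a₁` the minimum is `k`.
-/

open MvPolynomial

namespace Polynomial

variable {R : Type*}

theorem eq_of_X_pow_mul_eq_X_pow_mul [Semiring R] {m n : ℕ} {p q : R[X]}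
    (hp : p.coeff 0 ≠ 0) (hq : q.coeff 0 ≠ 0) (h : X ^ m * p = X ^ n * q) : m = n := by
  have le_of_eq : ∀ {m n : ℕ} {p q : R[X]},
      p.coeff 0 ≠ 0 → X ^ m * p = X ^ n * q → n ≤ m := by
    intro m n p q hp h
    by_contra! hlt
    exact hp (by simpa [coeff_X_pow_mul', hlt.not_ge] using congrArg (coeff · m) h)
  exact le_antisymm (le_of_eq hq h.symm) (le_of_eq hp h)

theorem exists_neg_X_pow_pow_sub_pow [CommRing R] [Nontrivial R] {d m n : ℕ} (hd : 0 < d)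
    (hmn : m ≠ n) : ∃ q : R[X], q.coeff 0 ≠ 0 ∧
      (-X ^ d : R[X]) ^ m - (-X ^ d) ^ n = X ^ (min m n * d) * q := by
  have factor : ∀ {m n : ℕ}, m < n → (-X ^ d : R[X]) ^ m - (-X ^ d) ^ n =
      X ^ (m * d) * ((-1) ^ m * (1 - (-X ^ d) ^ (n - m))) := by
    intro m n hlt
    obtain ⟨j, rfl⟩ := Nat.exists_eq_add_of_lt hlt
    rw [Nat.add_assoc, Nat.add_sub_cancel_left, pow_add, neg_pow (X ^ d : R[X]) m, ← pow_mul,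
      mul_comm d m]
    ring
  have coeff_zero_ne : ∀ {m n : ℕ}, m < n →
      ((-1) ^ m * (1 - (-X ^ d : R[X]) ^ (n - m))).coeff 0 ≠ 0 := by
    intro m n hlt
    simpa [coeff_zero_eq_eval_zero, hd.ne', (Nat.sub_pos_of_lt hlt).ne'] using
      (isUnit_one.neg.pow m : IsUnit ((-1 : R) ^ m)).ne_zero
  rcases hmn.lt_or_gt with hlt | hlt
  · exact ⟨_, coeff_zero_ne hlt, by rw [min_eq_left hlt.le, factor hlt]⟩
  · refine ⟨_, ?_, by rw [min_eq_right hlt.le, ← neg_sub, factor hlt, ← mul_neg]⟩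
    rw [coeff_neg, neg_ne_zero]
    exact coeff_zero_ne hlt

end Polynomial

theorem rigidity_identity_aeval_neg_X_pow {R : Type*} [CommRing R] {k ℓ : ℕ}
    (a : Fin k → ℕ) (b : Fin ℓ → ℕ) (i₀ : Fin k) (hba : ∀ j, b j ≤ a i₀)
    (hrigid : (∏ i, (X 0 * X 2 ^ (a i) + X 1)) * (∏ j, (X 0 + X 1 * X 2 ^ (b j))) -
        (∏ i, (X 0 + X 1 * X 2 ^ (a i))) * (∏ j, (X 0 * X 2 ^ (b j) + X 1)) =
      (X 0 ^ k * X 1 ^ ℓ - X 0 ^ ℓ * X 1 ^ k) * (∏ i, (X 2 ^ (a i) - 1)) *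
        (∏ j, (X 2 ^ (b j) - 1) : MvPolynomial (Fin 3) R)) :
    Polynomial.X ^ (∑ j, b j) * ((∏ i, (1 - Polynomial.X ^ (a i₀ + a i))) *
        ∏ j, (1 - Polynomial.X ^ (a i₀ - b j))) =
      ((-Polynomial.X ^ a i₀) ^ k - (-Polynomial.X ^ a i₀) ^ ℓ) *
        ((∏ i, (Polynomial.X ^ a i - 1)) * ∏ j, (Polynomial.X ^ b j - 1) : Polynomial R) := by
  have h := congrArg (aeval ![(-Polynomial.X ^ a i₀ : Polynomial R), 1, Polynomial.X]) hrigid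
  simp only [map_sub, map_mul, map_add, map_prod, map_pow, map_one, aeval_X,
    Matrix.cons_val_zero, Matrix.cons_val_one, Matrix.cons_val_two, Matrix.head_cons,
    Matrix.tail_cons, one_mul, mul_one, one_pow] at h
  have hvanish : ∏ i, (-Polynomial.X ^ a i₀ + Polynomial.X ^ a i : Polynomial R) = 0 :=
    Finset.prod_eq_zero (Finset.mem_univ i₀) (neg_add_cancel _)
  have hfirst : ∏ i, (-Polynomial.X ^ a i₀ * Polynomial.X ^ a i + 1 : Polynomial R) =
      ∏ i, (1 - Polynomial.X ^ (a i₀ + a i)) :=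
    Finset.prod_congr rfl fun i _ => by rw [pow_add]; ring
  have hsecond : ∏ j, (-Polynomial.X ^ a i₀ + Polynomial.X ^ b j : Polynomial R) =
      Polynomial.X ^ (∑ j, b j) * ∏ j, (1 - Polynomial.X ^ (a i₀ - b j)) := by
    rw [← Finset.prod_pow_eq_pow_sum, ← Finset.prod_mul_distrib]
    refine Finset.prod_congr rfl fun j _ => ?_
    rw [mul_sub, mul_one, ← pow_add, Nat.add_sub_cancel' (hba j)]
    ring
  rw [hvanish, zero_mul, sub_zero, hfirst, hsecond] at h
  linear_combination h

theorem stmt5_general (k ℓ : ℕ) (hk : 1 ≤ k) (hℓ : 1 ≤ ℓ)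
    (a : Fin k → ℕ) (b : Fin ℓ → ℕ)
    (ha : ∀ i, 0 < a i) (hb : ∀ j, 0 < b j)
    (hgt : ∀ j, b j < a ⟨0, hk⟩)
    (X Y Z : MvPolynomial (Fin 3) ℤ)
    (hX : X = MvPolynomial.X 0) (hY : Y = MvPolynomial.X 1) (hZ : Z = MvPolynomial.X 2)
    (hrigid : (∏ i, (X * Z ^ (a i) + Y)) * (∏ j, (X + Y * Z ^ (b j))) -
        (∏ i, (X + Y * Z ^ (a i))) * (∏ j, (X * Z ^ (b j) + Y)) =
      (X ^ k * Y ^ ℓ - X ^ ℓ * Y ^ k) * (∏ i, (Z ^ (a i) - 1)) * (∏ j, (Z ^ (b j) - 1))) :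
    k * a ⟨0, hk⟩ = ∑ j, b j := by
  subst hX hY hZ
  have key := rigidity_identity_aeval_neg_X_pow a b ⟨0, hk⟩ (fun j => (hgt j).le) hrigid
  set A := a ⟨0, hk⟩
  have hU : ((∏ i, (1 - Polynomial.X ^ (A + a i))) *
      ∏ j, (1 - Polynomial.X ^ (A - b j)) : Polynomial ℤ).coeff 0 ≠ 0 := by
    simp [Polynomial.coeff_zero_eq_eval_zero, Polynomial.eval_prod, fun i => (ha i).ne',
      fun j => (Nat.sub_pos_of_lt (hgt j)).ne']
  have hW : ((∏ i, (Polynomial.X ^ a i - 1)) *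
      ∏ j, (Polynomial.X ^ b j - 1) : Polynomial ℤ).coeff 0 ≠ 0 := by
    simp [Polynomial.coeff_zero_eq_eval_zero, Polynomial.eval_prod, fun i => (ha i).ne',
      fun j => (hb j).ne']
  have hsum_lt : ∑ j, b j < ℓ * A := by
    simpa [mul_comm] using
      Finset.sum_lt_sum_of_nonempty (Finset.univ_nonempty_iff.mpr ⟨⟨0, hℓ⟩⟩) fun j _ => hgt j
  rcases eq_or_ne k ℓ with rfl | hkℓ
  · rw [sub_self, zero_mul] at key
    refine absurd key (mul_ne_zero (pow_ne_zero _ Polynomial.X_ne_zero) fun hU0 => hU ?_)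
    simp [hU0]
  obtain ⟨q, hq, hfactor⟩ :=
    Polynomial.exists_neg_X_pow_pow_sub_pow (R := ℤ) (ha ⟨0, hk⟩) hkℓ
  rw [hfactor, mul_assoc] at key
  have hsum : ∑ j, b j = min k ℓ * A := by
    refine Polynomial.eq_of_X_pow_mul_eq_X_pow_mul hU ?_ key
    rw [Polynomial.mul_coeff_zero]
    exact mul_ne_zero hq hW
  have hmin : min k ℓ = k := by
    have := Nat.lt_of_mul_lt_mul_right (hsum ▸ hsum_lt)
    omega
  rw [hsum, hmin]

/-- **Equation (8) of the paper.** If positive integers `a₁ ≥ aᵢ`, `a₁ > bⱼ` satisfy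
the rigidity identity (equation (5) with denominators cleared) in `ℤ[x,y,z]`, then
`k·a₁ = b₁ + ⋯ + b_ℓ` (obtained by substituting `x = −z^{a₁}`, `y = 1`). -/
theorem stmt5 (k ℓ : ℕ) (hk : 1 ≤ k) (hℓ : 1 ≤ ℓ)
    (a : Fin k → ℕ) (b : Fin ℓ → ℕ)
    (ha : ∀ i, 0 < a i) (hb : ∀ j, 0 < b j)
    (hmax : ∀ i, a i ≤ a ⟨0, hk⟩) (hgt : ∀ j, b j < a ⟨0, hk⟩)
    (X Y Z : MvPolynomial (Fin 3) ℤ)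
    (hX : X = MvPolynomial.X 0) (hY : Y = MvPolynomial.X 1) (hZ : Z = MvPolynomial.X 2)
    (hrigid : (∏ i, (X * Z ^ (a i) + Y)) * (∏ j, (X + Y * Z ^ (b j))) -
        (∏ i, (X + Y * Z ^ (a i))) * (∏ j, (X * Z ^ (b j) + Y)) =
      (X ^ k * Y ^ ℓ - X ^ ℓ * Y ^ k) * (∏ i, (Z ^ (a i) - 1)) * (∏ j, (Z ^ (b j) - 1))) :
    k * a ⟨0, hk⟩ = ∑ j, b j :=
  stmt5_general k ℓ hk hℓ a b ha hb hgt X Y Z hX hY hZ hrigid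
end

section
/- Let k ≥ 1 and ℓ ≥ 1 be integers, and let a_1,…,a_k and b_1,…,b_ℓ be positive integers such that a_1 ≥ a_i for all i and a_1 > b_j for all j. Suppose the rigidity identity holds in ℤ[x,y,z]: ∏_{i=1}^k (x·z^{a_i} + y) · ∏_{j=1}^ℓ (x + y·z^{b_j}) − ∏_{i=1}^k (x + y·z^{a_i}) · ∏_{j=1}^ℓ (x·z^{b_j} + y) = (x^k·y^ℓ − x^ℓ·y^k) · ∏_{i=1}^k (z^{a_i} − 1) · ∏_{j=1}^ℓ (z^{b_j} − 1). Then a_i = a_1 for every i = 1,…,k, the integer k is odd, and the integer ℓ is even. -/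
open MvPolynomial Finset

private lemma int_dvd3 (u : ℤ) : (3:ℤ) ∣ u ↔ ((u : ZMod 3) = 0) := by
  simpa using (ZMod.intCast_zmod_eq_zero_iff_dvd u 3).symm

private lemma pow3_eq (s m : ℕ) (u v : ℤ) (hu : ¬ (3:ℤ) ∣ u) (hv : ¬ (3:ℤ) ∣ v)
    (h : 3 ^ s * u = 3 ^ m * v) : s = m := by
  rcases lt_trichotomy s m with hlt | he | hlt
  · exfalso; apply hu
    have h3 : (3:ℤ) ^ s ≠ 0 := pow_ne_zero _ (by norm_num)
    have hpow : (3:ℤ) ^ m = 3 ^ s * 3 ^ (m - s) := by rw [← pow_add]; congr 1; omega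
    rw [hpow, mul_assoc] at h
    have hu' : u = 3 ^ (m - s) * v := mul_left_cancel₀ h3 h
    rw [hu']
    exact Dvd.dvd.mul_right (dvd_pow_self 3 (by omega)) v
  · exact he
  · exfalso; apply hv
    have h3 : (3:ℤ) ^ m ≠ 0 := pow_ne_zero _ (by norm_num)
    have hpow : (3:ℤ) ^ s = 3 ^ m * 3 ^ (s - m) := by rw [← pow_add]; congr 1; omega
    rw [hpow, mul_assoc] at h
    have hv' : 3 ^ (s - m) * u = v := mul_left_cancel₀ h3 h
    rw [← hv']
    exact Dvd.dvd.mul_right (dvd_pow_self 3 (by omega)) u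

private lemma sum_eq_max {k : ℕ} (f : Fin k → ℕ) (A : ℕ) (h : ∀ i, f i ≤ A)
    (hs : ∑ i, f i = k * A) : ∀ i, f i = A := by
  by_contra hc
  push_neg at hc
  obtain ⟨i, hi⟩ := hc
  have hlt : f i < A := lt_of_le_of_ne (h i) hi
  have : ∑ i, f i < ∑ _i : Fin k, A :=
    Finset.sum_lt_sum (fun j _ => h j) ⟨i, Finset.mem_univ i, hlt⟩
  simp [Finset.sum_const, Finset.card_univ] at this
  omega

/-- **Intermediate step of the proof of Theorem 1 (combining equations (6) and (8)).**
If positive integers `a₁ ≥ aᵢ`, `a₁ > bⱼ` satisfy the rigidity identity (equation (5) with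
denominators cleared) in `ℤ[x,y,z]`, then all `aᵢ` equal `a₁`, `k` is odd and `ℓ` is even. -/
theorem stmt6 (k ℓ : ℕ) (hk : 1 ≤ k) (hℓ : 1 ≤ ℓ)
    (a : Fin k → ℕ) (b : Fin ℓ → ℕ)
    (ha : ∀ i, 0 < a i) (hb : ∀ j, 0 < b j)
    (hmax : ∀ i, a i ≤ a ⟨0, hk⟩) (hgt : ∀ j, b j < a ⟨0, hk⟩)
    (X Y Z : MvPolynomial (Fin 3) ℤ)
    (hX : X = MvPolynomial.X 0) (hY : Y = MvPolynomial.X 1) (hZ : Z = MvPolynomial.X 2)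
    (hrigid : (∏ i, (X * Z ^ (a i) + Y)) * (∏ j, (X + Y * Z ^ (b j))) -
        (∏ i, (X + Y * Z ^ (a i))) * (∏ j, (X * Z ^ (b j) + Y)) =
      (X ^ k * Y ^ ℓ - X ^ ℓ * Y ^ k) * (∏ i, (Z ^ (a i) - 1)) * (∏ j, (Z ^ (b j) - 1))) :
    (∀ i, a i = a ⟨0, hk⟩) ∧ Odd k ∧ Even ℓ := by
  subst hX hY hZ
  have hE : ∀ x y z : ℤ,
      (∏ i, (x * z ^ a i + y)) * (∏ j, (x + y * z ^ b j)) -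
        (∏ i, (x + y * z ^ a i)) * (∏ j, (x * z ^ b j + y)) =
      (x ^ k * y ^ ℓ - x ^ ℓ * y ^ k) * (∏ i, (z ^ a i - 1)) * (∏ j, (z ^ b j - 1)) := by
    intro x y z
    have h := congrArg (MvPolynomial.eval ![x, y, z]) hrigid
    simpa [map_sub, map_mul, map_add, map_pow, eval_prod] using h
  clear hrigid
  set A := a ⟨0, hk⟩ with hA
  have hA1 : 1 ≤ A := ha _
  -- Step 1 : sum a = sum b
  have h1 := hE 1 0 2
  rw [zero_pow (by omega : ℓ ≠ 0), zero_pow (by omega : k ≠ 0)] at h1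
  simp only [one_mul, mul_zero, add_zero, mul_one, zero_add, one_pow, zero_mul,
    sub_zero, zero_sub, Finset.prod_const_one] at h1
  have h1' : (2:ℤ) ^ (∑ i, a i) = 2 ^ (∑ j, b j) := by
    rw [← Finset.prod_pow_eq_pow_sum, ← Finset.prod_pow_eq_pow_sum]
    linarith [h1]
  have hSab : ∑ i, a i = ∑ j, b j := Int.pow_right_injective (by norm_num) h1'
  -- Step 2 : substitution x = -3^A, y = 1, z = 3
  have h2 := hE (-3 ^ A) 1 3
  have hzero : (∏ i, ((-3 ^ A : ℤ) + 1 * 3 ^ a i)) = 0 :=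
    Finset.prod_eq_zero (Finset.mem_univ ⟨0, hk⟩) (by rw [← hA]; ring)
  rw [hzero, zero_mul, sub_zero] at h2
  rw [Finset.prod_congr rfl
        (fun i _ => show ((-3 ^ A : ℤ) * 3 ^ a i + 1) = 1 - 3 ^ (A + a i) from by
          rw [pow_add]; ring),
      Finset.prod_congr rfl
        (fun j _ => show ((-3 ^ A : ℤ) + 1 * 3 ^ b j) = 3 ^ b j * (1 - 3 ^ (A - b j)) from by
          rw [mul_sub, mul_one, ← pow_add, Nat.add_sub_cancel' (le_of_lt (hgt j))]; ring),
      Finset.prod_mul_distrib, Finset.prod_pow_eq_pow_sum] at h2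
  rw [show ((-3 ^ A : ℤ)) ^ k = (-1) ^ k * 3 ^ (A * k) from by rw [neg_pow, ← pow_mul],
      show ((-3 ^ A : ℤ)) ^ ℓ = (-1) ^ ℓ * 3 ^ (A * ℓ) from by rw [neg_pow, ← pow_mul]] at h2
  set Sb := ∑ j, b j with hSb
  set U : ℤ := (∏ i, (1 - (3:ℤ) ^ (A + a i))) * (∏ j, (1 - (3:ℤ) ^ (A - b j))) with hU
  set V : ℤ := (∏ i, ((3:ℤ) ^ a i - 1)) * (∏ j, ((3:ℤ) ^ b j - 1)) with hV
  have key : 3 ^ Sb * U = ((-1) ^ k * 3 ^ (A * k) - (-1) ^ ℓ * 3 ^ (A * ℓ)) * V := by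
    rw [hU, hV]; linear_combination h2
  -- mod 3 facts
  have hUcast : ((U : ℤ) : ZMod 3) = 1 := by
    rw [hU]
    push_cast
    rw [Finset.prod_congr rfl (fun i _ => show ((1:ZMod 3) - 3 ^ (A + a i)) = 1 from by
          rw [show ((3:ZMod 3)) = 0 from by decide, zero_pow (by have := ha i; omega)]; ring),
        Finset.prod_congr rfl (fun j _ => show ((1:ZMod 3) - 3 ^ (A - b j)) = 1 from by
          rw [show ((3:ZMod 3)) = 0 from by decide, zero_pow (by have := hgt j; omega)]; ring),
        Finset.prod_const_one, Finset.prod_const_one, mul_one]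
  have hVcast : ((V : ℤ) : ZMod 3) = (-1) ^ k * (-1) ^ ℓ := by
    rw [hV]
    push_cast
    rw [Finset.prod_congr rfl (fun i _ => show ((3:ZMod 3) ^ a i - 1) = -1 from by
          rw [show ((3:ZMod 3)) = 0 from by decide, zero_pow (by have := ha i; omega)]; ring),
        Finset.prod_congr rfl (fun j _ => show ((3:ZMod 3) ^ b j - 1) = -1 from by
          rw [show ((3:ZMod 3)) = 0 from by decide, zero_pow (by have := hb j; omega)]; ring),
        Finset.prod_const, Finset.prod_const, Finset.card_univ, Finset.card_univ,
        Fintype.card_fin, Fintype.card_fin]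
  have hU3 : ¬ (3:ℤ) ∣ U := by
    rw [int_dvd3, hUcast]; decide
  have hV3 : ¬ (3:ℤ) ∣ V := by
    rw [int_dvd3, hVcast]
    rcases Nat.even_or_odd k with h | h <;> rcases Nat.even_or_odd ℓ with h' | h' <;>
      simp [h.neg_one_pow, h'.neg_one_pow] <;> decide
  -- positivity facts
  have hpow3 : ∀ m : ℕ, 1 ≤ m → (1:ℤ) < 3 ^ m := fun m hm =>
    one_lt_pow₀ (by norm_num) (by omega)
  have hVpos : 0 < V := by
    rw [hV]
    apply mul_pos <;> apply Finset.prod_pos <;> intro i _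
    · have := hpow3 (a i) (ha i); linarith
    · have := hpow3 (b i) (hb i); linarith
  have hPQpos : 0 < (∏ i, ((3:ℤ) ^ (A + a i) - 1)) * (∏ j, ((3:ℤ) ^ (A - b j) - 1)) := by
    apply mul_pos <;> apply Finset.prod_pos <;> intro i _
    · have := hpow3 (A + a i) (by have := ha i; omega); linarith
    · have := hpow3 (A - b i) (by have := hgt i; omega); linarith
  have hUeq : U = (-1) ^ (k + ℓ) *
      ((∏ i, ((3:ℤ) ^ (A + a i) - 1)) * (∏ j, ((3:ℤ) ^ (A - b j) - 1))) := by
    rw [hU,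
      Finset.prod_congr rfl (fun i _ => show ((1:ℤ) - 3 ^ (A + a i)) =
        -1 * (3 ^ (A + a i) - 1) from by ring),
      Finset.prod_congr rfl (fun j _ => show ((1:ℤ) - 3 ^ (A - b j)) =
        -1 * (3 ^ (A - b j) - 1) from by ring),
      Finset.prod_mul_distrib, Finset.prod_mul_distrib, Finset.prod_const, Finset.prod_const,
      Finset.card_univ, Finset.card_univ, Fintype.card_fin, Fintype.card_fin, pow_add]
    ring
  -- Sb bound
  have hSbBound : Sb ≤ ℓ * (A - 1) := by
    rw [hSb]
    calc ∑ j, b j ≤ ∑ _j : Fin ℓ, (A - 1) :=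
          Finset.sum_le_sum (fun j _ => by have := hgt j; omega)
    _ = ℓ * (A - 1) := by rw [Finset.sum_const, Finset.card_univ, Fintype.card_fin, smul_eq_mul]
  -- trichotomy
  rcases lt_trichotomy k ℓ with hkl | hkl | hkl
  · -- k < ℓ : the real case
    have hsplit : A * ℓ = A * k + A * (ℓ - k) := by rw [← Nat.mul_add]; congr 1; omega
    set w : ℤ := (-1) ^ k - (-1) ^ ℓ * 3 ^ (A * (ℓ - k)) with hw
    have key2 : 3 ^ Sb * U = 3 ^ (A * k) * (w * V) := by
      rw [key, hsplit, pow_add, hw]; ring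
    have hw3 : ¬ (3:ℤ) ∣ w := by
      rw [int_dvd3, hw]
      push_cast
      rw [show ((3:ZMod 3)) = 0 from by decide,
        zero_pow (Nat.mul_ne_zero (by omega) (by omega))]
      rcases Nat.even_or_odd k with h | h <;> simp [h.neg_one_pow] <;> decide
    have hwV3 : ¬ (3:ℤ) ∣ (w * V) := by
      intro hd
      rcases Int.prime_three.2.2 _ _ hd with h | h
      exacts [hw3 h, hV3 h]
    have hSbeq : Sb = A * k := pow3_eq _ _ _ _ hU3 hwV3 key2
    have haiA : ∀ i, a i = A := by
      apply sum_eq_max a A hmax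
      rw [hSab, hSbeq, Nat.mul_comm]
    have hUw : U = w * V := by
      have h3 : ((3:ℤ) ^ Sb) ≠ 0 := pow_ne_zero _ (by norm_num)
      apply mul_left_cancel₀ h3
      rw [key2, hSbeq]
    -- ℓ even
    have hleven : Even ℓ := by
      rcases Nat.even_or_odd ℓ with h | h
      · exact h
      exfalso
      have := congrArg (fun x : ℤ => (x : ZMod 3)) hUw
      rw [hUcast] at this
      push_cast at this
      rw [hVcast, hw] at this
      push_cast at this
      rw [show ((3:ZMod 3)) = 0 from by decide,
        zero_pow (Nat.mul_ne_zero (by omega) (by omega))] at this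
      rw [h.neg_one_pow] at this
      rcases Nat.even_or_odd k with h' | h' <;> rw [h'.neg_one_pow] at this <;>
        revert this <;> decide
    -- k odd
    have hkodd : Odd k := by
      rcases Nat.even_or_odd k with h | h
      · exfalso
        have hwneg : w < 0 := by
          rw [hw, hleven.neg_one_pow, h.neg_one_pow, one_mul]
          have := hpow3 (A * (ℓ - k)) (Nat.one_le_iff_ne_zero.mpr (Nat.mul_ne_zero (by omega) (by omega)))
          linarith
        have hUneg : U < 0 := by
          rw [hUw]
          exact mul_neg_of_neg_of_pos hwneg hVpos
        have hUpos : 0 < U := by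
          rw [hUeq, (h.add hleven).neg_one_pow, one_mul]
          exact hPQpos
        linarith
      · exact h
    exact ⟨haiA, hkodd, hleven⟩
  · -- k = ℓ : W = 0, contradiction
    exfalso
    subst hkl
    rw [sub_self, zero_mul] at key
    have : U = 0 := by
      have h3 : ((3:ℤ) ^ Sb) ≠ 0 := pow_ne_zero _ (by norm_num)
      exact (mul_eq_zero.mp key).resolve_left h3
    rw [this] at hU3
    exact hU3 (dvd_zero 3)
  · -- ℓ < k : valuation contradiction
    exfalso
    have hsplit : A * k = A * ℓ + A * (k - ℓ) := by rw [← Nat.mul_add]; congr 1; omega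
    set w : ℤ := (-1) ^ k * 3 ^ (A * (k - ℓ)) - (-1) ^ ℓ with hw
    have key2 : 3 ^ Sb * U = 3 ^ (A * ℓ) * (w * V) := by
      rw [key, hsplit, pow_add, hw]; ring
    have hw3 : ¬ (3:ℤ) ∣ w := by
      rw [int_dvd3, hw]
      push_cast
      rw [show ((3:ZMod 3)) = 0 from by decide,
        zero_pow (Nat.mul_ne_zero (by omega) (by omega))]
      rcases Nat.even_or_odd ℓ with h | h <;> simp [h.neg_one_pow] <;> decide
    have hwV3 : ¬ (3:ℤ) ∣ (w * V) := by
      intro hd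
      rcases Int.prime_three.2.2 _ _ hd with h | h
      exacts [hw3 h, hV3 h]
    have hSbeq : Sb = A * ℓ := pow3_eq _ _ _ _ hU3 hwV3 key2
    have e2 : ℓ * (A - 1) < ℓ * A :=
      mul_lt_mul_of_pos_left (by omega : A - 1 < A) (by omega : 0 < ℓ)
    have e3 : ℓ * A = A * ℓ := Nat.mul_comm ℓ A
    omega
end

section
/- Let k ≥ 1 and ℓ ≥ 1 be integers, let a be a positive integer, and let b_1,…,b_ℓ be positive integers with b_j < a for all j. Suppose the rigidity identity holds in ℤ[x,y,z] with a_1 = … = a_k = a: (x·z^{a} + y)^k · ∏_{j=1}^ℓ (x + y·z^{b_j}) − (x + y·z^{a})^k · ∏_{j=1}^ℓ (x·z^{b_j} + y) = (x^k·y^ℓ − x^ℓ·y^k) · (z^{a} − 1)^k · ∏_{j=1}^ℓ (z^{b_j} − 1). Then ℓ > k and the following identity holds in ℤ[z]: (z^{a} + 1)^k · ∏_{j=1}^ℓ (z^{a − b_j} − 1) = (z^{a·(ℓ−k)} + 1) · ∏_{j=1}^ℓ (z^{b_j} − 1). -/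
section Stmt7Aux
open Polynomial

lemma stmt7_td_form (c : ℤ) (hc : c ≠ 0) (n : ℕ) (R : ℤ[X]) (hR : R.coeff 0 ≠ 0) :
    (C c * X ^ n * R).natTrailingDegree = n ∧
      (C c * X ^ n * R).trailingCoeff = c * R.coeff 0 := by
  have hR0 : R ≠ 0 := fun h => hR (by simp [h])
  have hC : (C c : ℤ[X]) ≠ 0 := by simpa using hc
  have hXp : (X : ℤ[X]) ^ n ≠ 0 := pow_ne_zero _ X_ne_zero
  have hRtd : R.natTrailingDegree = 0 := natTrailingDegree_eq_zero.2 (Or.inr hR)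
  have hRtc : R.trailingCoeff = R.coeff 0 := by rw [trailingCoeff, hRtd]
  constructor
  · rw [natTrailingDegree_mul (mul_ne_zero hC hXp) hR0,
      natTrailingDegree_mul hC hXp, hRtd, natTrailingDegree_C, natTrailingDegree_X_pow]
    omega
  · rw [trailingCoeff_mul, trailingCoeff_mul, hRtc]
    have h1 : (C c).trailingCoeff = c := by
      rw [trailingCoeff, natTrailingDegree_C, coeff_C_zero]
    have h2 : ((X : ℤ[X]) ^ n).trailingCoeff = 1 := by
      rw [trailingCoeff, natTrailingDegree_X_pow, coeff_X_pow]; simp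
    rw [h1, h2, mul_one]

lemma stmt7_two_pow_sub_one_pos (m : ℕ) (hm : 0 < m) : 0 < (2 : ℤ) ^ m - 1 := by
  have h : (2 : ℤ) ^ 1 ≤ 2 ^ m := pow_le_pow_right₀ (by norm_num) hm
  simp only [pow_one] at h; linarith

end Stmt7Aux

local notation "PX" => (Polynomial.X : Polynomial ℤ)
local notation "PC" => (Polynomial.C : ℤ →+* Polynomial ℤ)

open MvPolynomial

/-- **Derivation of equation (9) from equation (5).** If `a₁ = ⋯ = a_k = a > bⱼ` and the
rigidity identity holds in `ℤ[x,y,z]`, then `ℓ > k` and the one-variable identity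
`(z^a + 1)^k ∏ⱼ (z^{a−bⱼ} − 1) = (z^{a(ℓ−k)} + 1) ∏ⱼ (z^{bⱼ} − 1)` holds in `ℤ[z]`. -/
theorem stmt7 (k ℓ : ℕ) (hk : 1 ≤ k) (hℓ : 1 ≤ ℓ)
    (a : ℕ) (ha : 0 < a) (b : Fin ℓ → ℕ)
    (hb : ∀ j, 0 < b j) (hgt : ∀ j, b j < a)
    (X Y Z : MvPolynomial (Fin 3) ℤ)
    (hX : X = MvPolynomial.X 0) (hY : Y = MvPolynomial.X 1) (hZ : Z = MvPolynomial.X 2)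
    (hrigid : (X * Z ^ a + Y) ^ k * (∏ j, (X + Y * Z ^ (b j))) -
        (X + Y * Z ^ a) ^ k * (∏ j, (X * Z ^ (b j) + Y)) =
      (X ^ k * Y ^ ℓ - X ^ ℓ * Y ^ k) * (Z ^ a - 1) ^ k * (∏ j, (Z ^ (b j) - 1))) :
    k < ℓ ∧
      ((Polynomial.X : Polynomial ℤ) ^ a + 1) ^ k *
          (∏ j, ((Polynomial.X : Polynomial ℤ) ^ (a - b j) - 1)) =
        ((Polynomial.X : Polynomial ℤ) ^ (a * (ℓ - k)) + 1) *
          (∏ j, ((Polynomial.X : Polynomial ℤ) ^ (b j) - 1)) := by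
  classical
  subst hX hY hZ
  have h1 := congrArg (MvPolynomial.aeval (R := ℤ)
      ![-(Polynomial.X ^ a : Polynomial ℤ), 1, Polynomial.X]) hrigid
  simp only [map_sub, map_mul, map_pow, map_add, map_prod, MvPolynomial.aeval_X, map_one,
    Matrix.cons_val_zero, Matrix.cons_val_one, Matrix.head_cons, Matrix.cons_val_two,
    Matrix.tail_cons, one_mul, one_pow, mul_one] at h1
  set P : Polynomial ℤ := ∏ j, (PX ^ (a - b j) - 1) with hP
  set Q : Polynomial ℤ := ∏ j, (PX ^ (b j) - 1) with hQ
  set B : ℕ := ∑ j, b j with hB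
  -- the vanishing term
  have hzero : (-PX ^ a + PX ^ a) ^ k = 0 := by
    rw [neg_add_cancel, zero_pow (by omega)]
  rw [hzero] at h1
  -- product rewriting
  have hprod : (∏ x, (-PX ^ a + PX ^ (b x))) = PC ((-1 : ℤ) ^ ℓ) * PX ^ B * P := by
    have he : (∏ x, (-PX ^ a + PX ^ (b x)))
        = ∏ j, (PC (-1 : ℤ) * PX ^ (b j) * (PX ^ (a - b j) - 1)) := by
      refine Finset.prod_congr rfl fun j _ => ?_
      have hj : PX ^ (b j) * PX ^ (a - b j) = PX ^ a := by
        rw [← pow_add, Nat.add_sub_cancel' (hgt j).le]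
      simp only [map_neg, map_one]
      linear_combination hj
    rw [he, Finset.prod_mul_distrib, Finset.prod_mul_distrib, Finset.prod_const,
      Finset.prod_pow_eq_pow_sum]
    simp [hP, hB, ← map_pow]
  have hfac : (-PX ^ a * PX ^ a + 1) ^ k
      = PC ((-1 : ℤ) ^ k) * (PX ^ a - 1) ^ k * (PX ^ a + 1) ^ k := by
    rw [map_pow, ← mul_pow, ← mul_pow]
    congr 1
    simp only [map_neg, map_one]
    ring
  have hnegk : (-PX ^ a) ^ k = PC ((-1 : ℤ) ^ k) * PX ^ (a * k) := by
    rw [neg_pow, ← pow_mul, map_pow]; simp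
  have hnegl : (-PX ^ a) ^ ℓ = PC ((-1 : ℤ) ^ ℓ) * PX ^ (a * ℓ) := by
    rw [neg_pow, ← pow_mul, map_pow]; simp
  have hXa : (PX ^ a - 1) ≠ 0 := by
    intro h
    have := congrArg (Polynomial.eval (0 : ℤ)) h
    simp [zero_pow ha.ne'] at this
  have hE0 : PC ((-1 : ℤ) ^ (k + ℓ)) * PX ^ B * ((PX ^ a + 1) ^ k * P)
      = (PC ((-1 : ℤ) ^ k) * PX ^ (a * k) - PC ((-1 : ℤ) ^ ℓ) * PX ^ (a * ℓ)) * Q := by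
    apply mul_right_cancel₀ (pow_ne_zero k hXa)
    rw [hprod, hfac, hnegk, hnegl] at h1
    rw [pow_add, map_mul]
    linear_combination h1
  -- coefficient facts
  have hcP : P.coeff 0 = (-1 : ℤ) ^ ℓ := by
    rw [Polynomial.coeff_zero_eq_eval_zero]
    simp [hP, Polynomial.eval_prod, zero_pow, fun j => (Nat.sub_ne_zero_of_lt (hgt j))]
  have hcQ : Q.coeff 0 = (-1 : ℤ) ^ ℓ := by
    rw [Polynomial.coeff_zero_eq_eval_zero]
    simp [hQ, Polynomial.eval_prod, zero_pow, fun j => (hb j).ne']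
  have hQ0 : Polynomial.eval 0 Q = (-1 : ℤ) ^ ℓ := by
    rw [← Polynomial.coeff_zero_eq_eval_zero]; exact hcQ
  have hP0 : Polynomial.eval 0 P = (-1 : ℤ) ^ ℓ := by
    rw [← Polynomial.coeff_zero_eq_eval_zero]; exact hcP
  have hcR1 : ((PX ^ a + 1) ^ k * P).coeff 0 = (-1 : ℤ) ^ ℓ := by
    rw [Polynomial.coeff_zero_eq_eval_zero, Polynomial.eval_mul, hP0]
    simp [zero_pow ha.ne']
  have hne1 : ((-1 : ℤ) ^ ℓ) ≠ 0 := by positivity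
  have hR1ne : ((PX ^ a + 1) ^ k * P) ≠ 0 := fun h => hne1 (by rw [← hcR1, h, Polynomial.coeff_zero])
  have hBle : B < a * ℓ := by
    have h1 : B ≤ ∑ _j : Fin ℓ, (a - 1) :=
      Finset.sum_le_sum fun j _ => by have := hgt j; omega
    simp only [Finset.sum_const, Finset.card_univ, Fintype.card_fin, smul_eq_mul] at h1
    have e : a * ℓ = (a - 1) * ℓ + ℓ := by
      calc a * ℓ = ((a - 1) + 1) * ℓ := by congr 1; omega
        _ = (a - 1) * ℓ + ℓ := by ring
    rw [Nat.mul_comm ℓ (a - 1)] at h1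
    linarith
  -- rule out k = ℓ
  have hkne : k ≠ ℓ := by
    intro h
    subst h
    rw [sub_self, zero_mul] at hE0
    exact (mul_ne_zero (mul_ne_zero
      (Polynomial.C_ne_zero.mpr (pow_ne_zero _ (by norm_num)))
      (pow_ne_zero _ Polynomial.X_ne_zero)) hR1ne) hE0
  -- rule out ℓ < k
  have hkl : k < ℓ := by
    rcases lt_or_gt_of_ne hkne with h | h
    · exact h
    exfalso
    have hsplit : a * k = a * ℓ + a * (k - ℓ) := by
      rw [← Nat.mul_add]; congr 1; omega
    have hform : (PC ((-1 : ℤ) ^ k) * PX ^ (a * k) - PC ((-1 : ℤ) ^ ℓ) * PX ^ (a * ℓ)) * Q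
        = PC (1 : ℤ) * PX ^ (a * ℓ) *
          ((PC ((-1 : ℤ) ^ k) * PX ^ (a * (k - ℓ)) - PC ((-1 : ℤ) ^ ℓ)) * Q) := by
      rw [hsplit, pow_add, map_one]; ring
    have hklpos : 0 < a * (k - ℓ) := Nat.mul_pos ha (by omega)
    have h2ℓ : ((-1 : ℤ)) ^ ℓ * (-1) ^ ℓ = 1 := by
      rw [← pow_add]; exact Even.neg_one_pow ⟨ℓ, rfl⟩
    have hG : ((PC ((-1 : ℤ) ^ k) * PX ^ (a * (k - ℓ)) - PC ((-1 : ℤ) ^ ℓ)) * Q).coeff 0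
        = -1 := by
      rw [Polynomial.coeff_zero_eq_eval_zero, Polynomial.eval_mul, hQ0]
      simp only [Polynomial.eval_sub, Polynomial.eval_mul, Polynomial.eval_C,
        Polynomial.eval_pow, Polynomial.eval_X, zero_pow hklpos.ne', mul_zero]
      linear_combination -h2ℓ
    have tdL := stmt7_td_form ((-1 : ℤ) ^ (k + ℓ)) (by positivity) B _ (hcR1 ▸ hne1)
    have tdR := stmt7_td_form (1 : ℤ) one_ne_zero (a * ℓ) _ (hG ▸ (by norm_num : (-1 : ℤ) ≠ 0))
    have hd := congrArg Polynomial.natTrailingDegree (hE0.trans hform)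
    rw [tdL.1, tdR.1] at hd
    omega
  refine ⟨hkl, ?_⟩
  -- now k < ℓ
  have hsplit : a * ℓ = a * k + a * (ℓ - k) := by
    rw [← Nat.mul_add]; congr 1; omega
  have hMpos : 0 < a * (ℓ - k) := Nat.mul_pos ha (by omega)
  have hform : (PC ((-1 : ℤ) ^ k) * PX ^ (a * k) - PC ((-1 : ℤ) ^ ℓ) * PX ^ (a * ℓ)) * Q
      = PC (1 : ℤ) * PX ^ (a * k) *
        ((PC ((-1 : ℤ) ^ k) - PC ((-1 : ℤ) ^ ℓ) * PX ^ (a * (ℓ - k))) * Q) := by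
    rw [hsplit, pow_add, map_one]; ring
  have hG : ((PC ((-1 : ℤ) ^ k) - PC ((-1 : ℤ) ^ ℓ) * PX ^ (a * (ℓ - k))) * Q).coeff 0
      = (-1 : ℤ) ^ k * (-1) ^ ℓ := by
    rw [Polynomial.coeff_zero_eq_eval_zero, Polynomial.eval_mul, hQ0]
    simp [zero_pow hMpos.ne']
  have hGne : ((PC ((-1 : ℤ) ^ k) - PC ((-1 : ℤ) ^ ℓ) * PX ^ (a * (ℓ - k))) * Q).coeff 0 ≠ 0 := by
    rw [hG]; positivity
  have tdL := stmt7_td_form ((-1 : ℤ) ^ (k + ℓ)) (by positivity) B _ (hcR1 ▸ hne1)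
  have tdR := stmt7_td_form (1 : ℤ) one_ne_zero (a * k) _ hGne
  have hd := congrArg Polynomial.natTrailingDegree (hE0.trans hform)
  rw [tdL.1, tdR.1] at hd
  have hc := congrArg Polynomial.trailingCoeff (hE0.trans hform)
  rw [tdL.2, tdR.2, hcR1, hG, one_mul] at hc
  -- hc : (-1)^(k+ℓ) * (-1)^ℓ = (-1)^k * (-1)^ℓ
  have hl1 : ((-1 : ℤ)) ^ ℓ = 1 := by
    rcases Nat.even_or_odd ℓ with hev | hod
    · exact hev.neg_one_pow
    · exfalso
      rcases Nat.even_or_odd k with h2 | h2 <;>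
        simp [pow_add, hod.neg_one_pow, h2.neg_one_pow] at hc
  have hkl1 : ((-1 : ℤ)) ^ (k + ℓ) = (-1) ^ k := by rw [pow_add, hl1, mul_one]
  rw [hkl1, hl1, map_one, one_mul, hd] at hE0
  have hE1 : PC ((-1 : ℤ) ^ k) * ((PX ^ a + 1) ^ k * P)
      = (PC ((-1 : ℤ) ^ k) - PX ^ (a * (ℓ - k))) * Q := by
    apply mul_left_cancel₀ (pow_ne_zero (a * k) (Polynomial.X_ne_zero (R := ℤ)))
    rw [hsplit, pow_add] at hE0
    linear_combination hE0
  have hCCz : ((-1 : ℤ)) ^ k * (-1) ^ k = 1 := by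
    rw [← pow_add]; exact Even.neg_one_pow ⟨k, rfl⟩
  have hCC : PC ((-1 : ℤ) ^ k) * PC ((-1 : ℤ) ^ k) = 1 := by
    rw [← map_mul, hCCz, map_one]
  have hE2 : (PX ^ a + 1) ^ k * P
      = (1 - PC ((-1 : ℤ) ^ k) * PX ^ (a * (ℓ - k))) * Q := by
    linear_combination (PC ((-1 : ℤ) ^ k)) * hE1 -
      ((PX ^ a + 1) ^ k * P - Q) * hCC
  -- rule out k even by evaluating at 2
  have hkodd : ((-1 : ℤ)) ^ k = -1 := by
    rcases Nat.even_or_odd k with hev | hod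
    · exfalso
      have he := congrArg (Polynomial.eval (2 : ℤ)) hE2
      simp only [Polynomial.eval_mul, Polynomial.eval_sub, Polynomial.eval_one,
        Polynomial.eval_pow, Polynomial.eval_add, Polynomial.eval_X, Polynomial.eval_C,
        hP, hQ, Polynomial.eval_prod, hev.neg_one_pow, one_mul] at he
      have hPv : 0 < ∏ j, ((2 : ℤ) ^ (a - b j) - 1) :=
        Finset.prod_pos fun j _ => by
          simpa using stmt7_two_pow_sub_one_pos _ (by have := hgt j; omega)
      have hQv : 0 < ∏ j, ((2 : ℤ) ^ (b j) - 1) :=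
        Finset.prod_pos fun j _ => by
          simpa using stmt7_two_pow_sub_one_pos _ (hb j)
      have hLv : 0 < ((2 : ℤ) ^ a + 1) ^ k * ∏ j, ((2 : ℤ) ^ (a - b j) - 1) :=
        mul_pos (pow_pos (by positivity) k) hPv
      have hM : 0 < (2 : ℤ) ^ (a * (ℓ - k)) - 1 := stmt7_two_pow_sub_one_pos _ hMpos
      have hRneg : (1 - (2 : ℤ) ^ (a * (ℓ - k))) * ∏ j, ((2 : ℤ) ^ (b j) - 1) < 0 :=
        mul_neg_of_neg_of_pos (by linarith) hQv
      linarith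
    · exact hod.neg_one_pow
  rw [hkodd] at hE2
  rw [hE2]
  simp only [map_neg, map_one]
  ring
end

section
/- Let k be an odd positive integer, ℓ an even positive integer, a a positive integer, and b_1,…,b_ℓ positive integers with b_j < a for all j and b_1 + b_2 + … + b_ℓ = k·a. Suppose the following identity holds in ℤ[z]: (z^{a} + 1)^k · ∏_{j=1}^ℓ (z^{a − b_j} − 1) = (z^{a·(ℓ−k)} + 1) · ∏_{j=1}^ℓ (z^{b_j} − 1). Then k = 1, ℓ = 2, and a = b_1 + b_2. -/
/-!
Since `∑ⱼ bⱼ < ℓ a`, we have `ℓ > k`. Evaluate the identity at a primitive `2N`-th root of unity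
`ζ`, where `N = a (ℓ - k)`, so that `ζ ^ N + 1 = 0` kills the right-hand side. As
`0 < a - bⱼ < a`, the left-hand side can only vanish through `ζ ^ a = -1`, which needs `N ≤ a`;
hence `ℓ = k + 1`. Cancelling one factor `X ^ a + 1` and evaluating at a primitive `2a`-th root
of unity then leaves `(ζ ^ a + 1) ^ (k - 1) ∏ⱼ (ζ ^ (a - bⱼ) - 1) = ∏ⱼ (ζ ^ bⱼ - 1) ≠ 0`,
so `k = 1`.
-/

open Polynomial

namespace IsPrimitiveRoot

variable {R : Type*} [CommRing R] [IsDomain R] {ζ : R} {N : ℕ}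

theorem pow_half_eq_neg_one (hζ : IsPrimitiveRoot ζ (2 * N)) (hN : 0 < N) : ζ ^ N = -1 :=
  (hζ.pow (by omega) (mul_comm 2 N)).eq_neg_one_of_two_right

theorem pow_add_one_ne_zero (hζ : IsPrimitiveRoot ζ (2 * N)) {m : ℕ} (hm : m < N) :
    ζ ^ m + 1 ≠ 0 := by
  rw [← sub_neg_eq_add, sub_ne_zero, ← hζ.pow_half_eq_neg_one (by omega)]
  exact fun h => hm.ne (hζ.pow_inj (by omega) (by omega) h)

theorem prod_pow_sub_one_ne_zero {n : ℕ} (hζ : IsPrimitiveRoot ζ n) {ι : Type*} {s : Finset ι}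
    {c : ι → ℕ} (hc : ∀ i ∈ s, 0 < c i ∧ c i < n) : ∏ i ∈ s, (ζ ^ c i - 1) ≠ 0 :=
  Finset.prod_ne_zero_iff.mpr fun i hi =>
    sub_ne_zero.mpr (hζ.pow_ne_one_of_pos_of_lt (hc i hi).1.ne' (hc i hi).2)

end IsPrimitiveRoot

theorem lt_card_of_sum_eq_mul {ι : Type*} [Fintype ι] [Nonempty ι] {b : ι → ℕ} {a k : ℕ}
    (hb : ∀ i, b i < a) (hsum : ∑ i, b i = k * a) : k < Fintype.card ι := by
  have hlt := Finset.sum_lt_sum_of_nonempty Finset.univ_nonempty fun i _ => hb i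
  rw [hsum, Finset.sum_const, Finset.card_univ, smul_eq_mul] at hlt
  exact Nat.lt_of_mul_lt_mul_right hlt

section WeightIdentity

variable {ι : Type*} [Fintype ι] {a k N : ℕ} {b : ι → ℕ}

theorem le_of_pow_add_one_pow_mul_prod_eq (hb : ∀ i, b i < a) (hN : 0 < N)
    (hid : ((X : ℤ[X]) ^ a + 1) ^ k * ∏ i, (X ^ (a - b i) - 1) =
      (X ^ N + 1) * ∏ i, (X ^ b i - 1)) :
    N ≤ a := by
  by_contra! haN
  obtain ⟨ζ, hζ⟩ : ∃ ζ : ℂ, IsPrimitiveRoot ζ (2 * N) :=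
    ⟨_, Complex.isPrimitiveRoot_exp _ (by omega)⟩
  have h := congrArg (aeval ζ) hid
  simp only [map_mul, map_pow, map_add, map_sub, map_one, map_prod, aeval_X,
    hζ.pow_half_eq_neg_one hN, neg_add_cancel, zero_mul] at h
  exact mul_ne_zero (pow_ne_zero _ (hζ.pow_add_one_ne_zero haN))
    (hζ.prod_pow_sub_one_ne_zero fun i _ => ⟨by grind, by grind⟩) h

theorem le_one_of_pow_add_one_pow_mul_prod_eq (ha : 0 < a) (hb₀ : ∀ i, 0 < b i)
    (hb : ∀ i, b i < a)
    (hid : ((X : ℤ[X]) ^ a + 1) ^ k * ∏ i, (X ^ (a - b i) - 1) =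
      (X ^ a + 1) * ∏ i, (X ^ b i - 1)) :
    k ≤ 1 := by
  by_contra! hk
  obtain ⟨j, rfl⟩ : ∃ j, k = j + 2 := ⟨k - 2, by omega⟩
  have hne : (X : ℤ[X]) ^ a + 1 ≠ 0 := by simpa using X_pow_add_C_ne_zero ha (1 : ℤ)
  have hcancel : ((X : ℤ[X]) ^ a + 1) ^ (j + 1) * ∏ i, (X ^ (a - b i) - 1) =
      ∏ i, (X ^ b i - 1) :=
    mul_left_cancel₀ hne (by rw [← hid]; ring)
  obtain ⟨ζ, hζ⟩ : ∃ ζ : ℂ, IsPrimitiveRoot ζ (2 * a) :=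
    ⟨_, Complex.isPrimitiveRoot_exp _ (by omega)⟩
  have h := congrArg (aeval ζ) hcancel
  simp only [map_mul, map_pow, map_add, map_sub, map_one, map_prod, aeval_X,
    hζ.pow_half_eq_neg_one ha, neg_add_cancel, zero_pow (Nat.succ_ne_zero _), zero_mul] at h
  exact hζ.prod_pow_sub_one_ne_zero (fun i _ => ⟨hb₀ i, by grind⟩) h.symm

end WeightIdentity

theorem stmt8_general (k ℓ : ℕ) (hk : 0 < k) (hℓ : 0 < ℓ)
    (a : ℕ) (ha : 0 < a) (b : Fin ℓ → ℕ)
    (hb : ∀ j, 0 < b j) (hgt : ∀ j, b j < a)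
    (hsum : ∑ j, b j = k * a)
    (hid : ((Polynomial.X : Polynomial ℤ) ^ a + 1) ^ k *
          (∏ j, ((Polynomial.X : Polynomial ℤ) ^ (a - b j) - 1)) =
        ((Polynomial.X : Polynomial ℤ) ^ (a * (ℓ - k)) + 1) *
          (∏ j, ((Polynomial.X : Polynomial ℤ) ^ (b j) - 1))) :
    k = 1 ∧ ℓ = 2 ∧ a = ∑ j, b j := by
  have : Nonempty (Fin ℓ) := ⟨⟨0, hℓ⟩⟩
  have hkℓ : k < ℓ := by simpa using lt_card_of_sum_eq_mul hgt hsum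
  have hNa : a * (ℓ - k) ≤ a :=
    le_of_pow_add_one_pow_mul_prod_eq hgt (Nat.mul_pos ha (by omega)) hid
  have hℓk : ℓ - k = 1 := by
    have := Nat.le_of_mul_le_mul_left (hNa.trans_eq (mul_one a).symm) ha
    omega
  rw [hℓk, mul_one] at hid
  have hk1 : k = 1 := by
    have := le_one_of_pow_add_one_pow_mul_prod_eq ha hb hgt hid
    omega
  exact ⟨hk1, by omega, by rw [hsum, hk1, one_mul]⟩

/-- **Analysis of equation (9).** Let `k` be odd, `ℓ` even, both positive, `a > 0`, and
`b₁, …, b_ℓ` positive integers with `bⱼ < a` and `b₁ + ⋯ + b_ℓ = k·a`. If the identity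
`(z^a + 1)^k ∏ⱼ (z^{a−bⱼ} − 1) = (z^{a(ℓ−k)} + 1) ∏ⱼ (z^{bⱼ} − 1)` holds in `ℤ[z]`,
then `k = 1`, `ℓ = 2` and `a = b₁ + b₂`. -/
theorem stmt8 (k ℓ : ℕ) (hk : 0 < k) (hkodd : Odd k) (hℓ : 0 < ℓ) (hℓeven : Even ℓ)
    (a : ℕ) (ha : 0 < a) (b : Fin ℓ → ℕ)
    (hb : ∀ j, 0 < b j) (hgt : ∀ j, b j < a)
    (hsum : ∑ j, b j = k * a)
    (hid : ((Polynomial.X : Polynomial ℤ) ^ a + 1) ^ k *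
          (∏ j, ((Polynomial.X : Polynomial ℤ) ^ (a - b j) - 1)) =
        ((Polynomial.X : Polynomial ℤ) ^ (a * (ℓ - k)) + 1) *
          (∏ j, ((Polynomial.X : Polynomial ℤ) ^ (b j) - 1))) :
    k = 1 ∧ ℓ = 2 ∧ a = ∑ j, b j :=
  stmt8_general k ℓ hk hℓ a ha b hb hgt hsum hid
end
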